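/- There exists a leafless subtree $T \subseteq T_2^o$ of the rooted binary tree containing the root, of positive Hausdorff dimension, and a subset $X \subseteq V(T)$ with positive lower density $d_*(X) = \liminf_{N\to\infty}\frac{1}{N}\sum_{n=1}^N |X \cap S_n(T)|/|S_n(T)| > 0$, such that for every $k \geq 1$ and $K \geq 1$ there exists $t \geq K$ with no pair $x, y \in X$ satisfying $d(x,y) = kt$. -/

import Mathlib

open Filter

/-- Length of the longest common prefix of two binary strings. -/
def lcpLen (x y : List Bool) : ℕ :=
  ((x.zip y).takeWhile fun p => p.1 == p.2).length

/-- Graph distance between two vertices of the rooted binary tree `T₂ᵒ`, whose vertices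
are finite binary strings (children of `l` are `l ++ [b]`). -/
def btDist (x y : List Bool) : ℕ :=
  (x.length - lcpLen x y) + (y.length - lcpLen x y)

/-- The sphere of radius `n` about the root in a subtree `T` of the binary tree. -/
def btSphere (T : Set (List Bool)) (n : ℕ) : Set (List Bool) :=
  {l ∈ T | l.length = n}

/-- Lower density of `X` in the subtree `T`. -/
noncomputable def btLowerDensity (T X : Set (List Bool)) : ℝ :=
  Filter.liminf
    (fun N : ℕ =>
      (∑ n ∈ Finset.Icc 1 N,
        ((X ∩ btSphere T n).ncard : ℝ) / ((btSphere T n).ncard : ℝ)) / (N : ℝ))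
    Filter.atTop

/-- Growth-rate (Hausdorff) dimension of a leafless subtree `T` of the binary tree:
`liminf_n log₂ |Sₙ(T)| / n`; for such trees this equals the Hausdorff dimension of the
boundary fractal `∂T ⊆ [0,1]`. -/
noncomputable def btDimension (T : Set (List Bool)) : ℝ :=
  Filter.liminf (fun n : ℕ => Real.logb 2 ((btSphere T n).ncard : ℝ) / (n : ℝ))
    Filter.atTop

/-!
Take for `A` the Bohr set `{n : {n√2} < 1/8}` and for `T` the subtree of `T₂ᵒ` that branches
exactly at the levels in `A`; `X` is the union of the spheres of `T` at levels in `A`. Two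
vertices of `X` at levels `m, n` meet at a level `ℓ ∈ A`, so their distance `d = (m - ℓ) + (n - ℓ)`
has `d√2` within `1/4` of an integer. For the irrational `β = k√2`, however, `‖tβ‖ ≥ 1/4` for
arbitrarily large `t`: if `‖tβ‖ < 1/4` for all `t ≥ K`, doubling would give
`‖2ʲKβ‖ = 2ʲ‖Kβ‖` for all `j`, forcing `‖Kβ‖ = 0`. Since `A` has bounded gaps, both `A` (hence
`X`) and the branching levels of `T` have positive density.
-/

open Finset

section Syndetic

def IsSyndetic (S : Set ℕ) (g : ℕ) : Prop :=
  ∀ m, ∃ a ∈ S, m < a ∧ a ≤ m + g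

variable {S : Set ℕ} {g : ℕ}

lemma IsSyndetic.pos (hS : IsSyndetic S g) : 0 < g := by
  obtain ⟨a, -, h₁, h₂⟩ := hS 0
  omega

lemma IsSyndetic.le_card_filter_Icc_mul [DecidablePred (· ∈ S)] (hS : IsSyndetic S g) (q : ℕ) :
    q ≤ #{n ∈ Icc 1 (q * g) | n ∈ S} := by
  induction q with
  | zero => exact Nat.zero_le _
  | succ q ih =>
    obtain ⟨a, haS, ha₁, ha₂⟩ := hS (q * g)
    have hsub : insert a {n ∈ Icc 1 (q * g) | n ∈ S} ⊆ {n ∈ Icc 1 ((q + 1) * g) | n ∈ S} := by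
      intro n hn
      simp only [mem_insert, mem_filter, mem_Icc] at hn ⊢
      rcases hn with rfl | ⟨⟨h₁, h₂⟩, hnS⟩
      · exact ⟨⟨by omega, by rw [add_one_mul]; omega⟩, haS⟩
      · exact ⟨⟨h₁, by rw [add_one_mul]; omega⟩, hnS⟩
    have ha : a ∉ {n ∈ Icc 1 (q * g) | n ∈ S} := by simp; omega
    calc q + 1 ≤ #(insert a {n ∈ Icc 1 (q * g) | n ∈ S}) := by rw [card_insert_of_notMem ha]; omega
      _ ≤ _ := card_le_card hsub

lemma IsSyndetic.le_two_mul_mul_card_filter_Icc [DecidablePred (· ∈ S)] (hS : IsSyndetic S g)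
    {N : ℕ} (hN : g ≤ N) : N ≤ 2 * g * #{n ∈ Icc 1 N | n ∈ S} := by
  have hg := hS.pos
  have hq : 1 ≤ N / g := (Nat.one_le_div_iff hg).2 hN
  have hcard : N / g ≤ #{n ∈ Icc 1 N | n ∈ S} :=
    (hS.le_card_filter_Icc_mul _).trans <| card_le_card <|
      filter_subset_filter _ (Icc_subset_Icc le_rfl (Nat.div_mul_le_self N g))
  have hlt : N < N / g * g + g := Nat.lt_div_mul_add hg
  nlinarith

lemma IsSyndetic.le_four_mul_mul_card_filter_range [DecidablePred (· ∈ S)] (hS : IsSyndetic S g)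
    {n : ℕ} (hn : g < n) : n ≤ 4 * g * #{i ∈ range n | i ∈ S} := by
  have hsub : #{i ∈ Icc 1 (n - 1) | i ∈ S} ≤ #{i ∈ range n | i ∈ S} :=
    card_le_card (filter_subset_filter _ fun i hi => by simp at hi ⊢; omega)
  calc n ≤ 2 * (n - 1) := by have := hS.pos; omega
    _ ≤ 2 * (2 * g * #{i ∈ Icc 1 (n - 1) | i ∈ S}) :=
      Nat.mul_le_mul_left 2 (hS.le_two_mul_mul_card_filter_Icc (by omega))
    _ = 4 * g * #{i ∈ Icc 1 (n - 1) | i ∈ S} := by ring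
    _ ≤ 4 * g * #{i ∈ range n | i ∈ S} := by gcongr

end Syndetic

section Bohr

open Int

def bohrSet (α ε : ℝ) : Set ℕ :=
  {n | fract (n * α) < ε}

/-- If `0 < {qα} < ε`, the multiples `m + jq` move `{mα}` in steps of `{qα}` until it wraps
around into `[0, {qα})`, which takes at most `N ≥ 1 / {qα}` steps. -/
lemma isSyndetic_bohrSet {α ε : ℝ} {q N : ℕ} (hpos : 0 < fract (q * α))
    (hε : fract (q * α) < ε) (hN : 1 ≤ N * fract (q * α)) : IsSyndetic (bohrSet α ε) (q * N) := by
  intro m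
  set δ := fract (q * α)
  set x := fract (m * α)
  have hx₀ : 0 ≤ x := fract_nonneg _
  have hx₁ : x < 1 := fract_lt_one _
  have hq : 0 < q := Nat.pos_of_ne_zero (by rintro rfl; simp [δ] at hpos)
  set j := ⌈(1 - x) / δ⌉₊
  have hj₀ : 0 < j := Nat.ceil_pos.2 (div_pos (by linarith) hpos)
  have hjN : j ≤ N := Nat.ceil_le.2 ((div_le_iff₀ hpos).2 (by linarith))
  have hj₁ : 1 - x ≤ j * δ := (div_le_iff₀ hpos).1 (Nat.le_ceil _)
  have hj₂ : j * δ < 1 - x + δ := by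
    have := Nat.ceil_lt_add_one (div_nonneg (by linarith : (0 : ℝ) ≤ 1 - x) hpos.le)
    rwa [← lt_div_iff₀ hpos, add_div, div_self hpos.ne']
  have hfract : fract (((m + q * j : ℕ) : ℝ) * α) = x + j * δ - 1 := by
    refine fract_eq_iff.2 ⟨by linarith, by linarith [fract_lt_one (q * α)],
      ⌊m * α⌋ + j * ⌊q * α⌋ + 1, ?_⟩
    simp only [x, δ, fract]
    push_cast
    ring
  refine ⟨m + q * j, ?_, by nlinarith, by nlinarith⟩
  show fract _ < ε
  rw [hfract]
  linarith

lemma exists_abs_sub_lt_of_mem_bohrSet {α ε : ℝ} {m n ℓ : ℕ} (hm : m ∈ bohrSet α ε)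
    (hn : n ∈ bohrSet α ε) (hℓ : ℓ ∈ bohrSet α ε) (hℓm : ℓ ≤ m) (hℓn : ℓ ≤ n) :
    ∃ z : ℤ, |(((m - ℓ) + (n - ℓ) : ℕ) : ℝ) * α - z| < 2 * ε := by
  refine ⟨⌊m * α⌋ + ⌊n * α⌋ - 2 * ⌊ℓ * α⌋, ?_⟩
  have hsplit : (((m - ℓ) + (n - ℓ) : ℕ) : ℝ) * α - ((⌊m * α⌋ + ⌊n * α⌋ - 2 * ⌊ℓ * α⌋ : ℤ) : ℝ)
      = fract (m * α) + fract (n * α) - 2 * fract (ℓ * α) := by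
    simp only [fract]
    push_cast [hℓm, hℓn]
    ring
  have := fract_nonneg ((m : ℝ) * α)
  have := fract_nonneg ((n : ℝ) * α)
  have := fract_nonneg ((ℓ : ℝ) * α)
  replace hm : fract (m * α) < ε := hm
  replace hn : fract (n * α) < ε := hn
  replace hℓ : fract (ℓ * α) < ε := hℓ
  rw [hsplit, abs_lt]
  constructor <;> linarith

lemma fract_five_mul_sqrt_two : fract (((5 : ℕ) : ℝ) * √2) = 5 * √2 - 7 := by
  have h2 : √2 ^ 2 = 2 := Real.sq_sqrt (by norm_num)
  have h0 : 0 ≤ √2 := Real.sqrt_nonneg 2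
  refine fract_eq_iff.2 ⟨by nlinarith, by nlinarith, 7, by push_cast; ring⟩

-- `{5√2} = 5√2 - 7 ≈ 0.071` lies in `(1/15, 1/8)`.
lemma isSyndetic_bohrSet_sqrt_two : IsSyndetic (bohrSet √2 (1 / 8)) 75 := by
  have h2 : √2 ^ 2 = 2 := Real.sq_sqrt (by norm_num)
  have h0 : 0 ≤ √2 := Real.sqrt_nonneg 2
  have := isSyndetic_bohrSet (α := √2) (ε := 1 / 8) (q := 5) (N := 15)
    (by rw [fract_five_mul_sqrt_two]; nlinarith) (by rw [fract_five_mul_sqrt_two]; nlinarith)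
    (by rw [fract_five_mul_sqrt_two]; push_cast; nlinarith)
  simpa using this

end Bohr

lemma abs_two_mul_sub_round {y : ℝ} (hy : |y - round y| < 1 / 4) :
    |2 * y - round (2 * y)| = 2 * |y - round y| := by
  have hround : round (2 * y) = 2 * round y := by
    rw [abs_lt] at hy
    rw [round_eq_iff]
    push_cast
    constructor <;> linarith
  rw [hround, Int.cast_mul, Int.cast_two, ← mul_sub, abs_mul, abs_two]

lemma Irrational.exists_nat_ge_quarter_le_abs_sub_round {β : ℝ} (hβ : Irrational β) (K : ℕ) :
    ∃ t ≥ K, 1 / 4 ≤ |t * β - round (t * β)| := by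
  by_contra! h
  set x := ((K + 1 : ℕ) : ℝ) * β
  have hcast (j : ℕ) : ((2 ^ j * (K + 1) : ℕ) : ℝ) * β = 2 ^ j * x := by
    push_cast [x]; ring
  have hK (j : ℕ) : K ≤ 2 ^ j * (K + 1) := by
    nlinarith [Nat.one_le_two_pow (n := j)]
  have hdouble (j : ℕ) : |2 ^ j * x - round (2 ^ j * x)| = 2 ^ j * |x - round x| := by
    induction j with
    | zero => simp
    | succ j ih =>
      have hj := h _ (hK j)
      rw [hcast] at hj
      calc |2 ^ (j + 1) * x - round (2 ^ (j + 1) * x)|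
          = |2 * (2 ^ j * x) - round (2 * (2 ^ j * x))| := by rw [pow_succ, mul_comm _ 2, mul_assoc]
        _ = 2 * |2 ^ j * x - round (2 ^ j * x)| := abs_two_mul_sub_round hj
        _ = 2 ^ (j + 1) * |x - round x| := by rw [ih, pow_succ]; ring
  have hx : 0 < |x - round x| :=
    abs_pos.2 (sub_ne_zero.2 ((hβ.natCast_mul (Nat.succ_ne_zero K)).ne_int _))
  obtain ⟨j, hj⟩ := pow_unbounded_of_one_lt (1 / 4 / |x - round x|) one_lt_two
  have hlt := h _ (hK j)
  rw [hcast, hdouble, ← lt_div_iff₀ hx] at hlt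
  linarith

lemma lcpLen_cons (a b : Bool) (x y : List Bool) :
    lcpLen (a :: x) (b :: y) = if a = b then lcpLen x y + 1 else 0 := by
  by_cases h : a = b <;> simp [lcpLen, h]

lemma lcpLen_le_length_left (x y : List Bool) : lcpLen x y ≤ x.length :=
  (List.takeWhile_prefix _).length_le.trans (by simp)

lemma lcpLen_le_length_right (x y : List Bool) : lcpLen x y ≤ y.length :=
  (List.takeWhile_prefix _).length_le.trans (by simp)

lemma getD_lcpLen_ne : ∀ x y : List Bool, lcpLen x y < x.length → lcpLen x y < y.length →
    x.getD (lcpLen x y) false ≠ y.getD (lcpLen x y) false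
  | [], _, hx, _ => absurd hx (Nat.not_lt_zero _)
  | _ :: _, [], _, hy => absurd hy (Nat.not_lt_zero _)
  | a :: x, b :: y, hx, hy => by
    by_cases hab : a = b
    · rw [lcpLen_cons, if_pos hab] at hx hy ⊢
      simpa using getD_lcpLen_ne x y (by simpa using hx) (by simpa using hy)
    · simp [lcpLen_cons, hab]

section BranchTree

/-- The edge of `l` from level `i` to level `i + 1` is `l.getD i false`; off `A` it must go to
the `false` child, so the tree branches exactly at the levels in `A`. -/
def branchTree (A : Set ℕ) : Set (List Bool) :=
  {l | ∀ i ∉ A, l.getD i false = false}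

def branchTreeLevels (A : Set ℕ) : Set (List Bool) :=
  {l ∈ branchTree A | l.length ∈ A}

variable {A : Set ℕ}

lemma nil_mem_branchTree : [] ∈ branchTree A :=
  fun _ _ => rfl

lemma List.IsPrefix.mem_branchTree {p l : List Bool} (hp : p <+: l) (hl : l ∈ branchTree A) :
    p ∈ branchTree A := by
  obtain ⟨r, rfl⟩ := hp
  intro i hi
  rcases lt_or_ge i p.length with h | h
  · rw [← List.getD_append p r false i h]
    exact hl i hi
  · exact List.getD_eq_default _ _ h

lemma append_false_mem_branchTree {l : List Bool} (hl : l ∈ branchTree A) :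
    l ++ [false] ∈ branchTree A := by
  intro i hi
  rcases lt_or_ge i l.length with h | h
  · rw [List.getD_append l _ false i h]
    exact hl i hi
  · rw [List.getD_append_right l _ false i h]
    grind

lemma replicate_false_mem_branchTree (n : ℕ) : List.replicate n false ∈ branchTree A := by
  intro i _
  grind

/-- Where two vertices of the tree part, the tree branches. -/
lemma lcpLen_mem_of_mem_branchTreeLevels {x y : List Bool} (hx : x ∈ branchTreeLevels A)
    (hy : y ∈ branchTreeLevels A) : lcpLen x y ∈ A := by
  rcases (lcpLen_le_length_left x y).eq_or_lt with h | hx'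
  · exact h ▸ hx.2
  rcases (lcpLen_le_length_right x y).eq_or_lt with h | hy'
  · exact h ▸ hy.2
  by_contra hA
  exact getD_lcpLen_ne x y hx' hy' (by rw [hx.1 _ hA, hy.1 _ hA])

lemma btSphere_finite (T : Set (List Bool)) (n : ℕ) : (btSphere T n).Finite :=
  (List.finite_length_eq Bool n).subset fun _ hl => hl.2

lemma ncard_btSphere_le (T : Set (List Bool)) (n : ℕ) : (btSphere T n).ncard ≤ 2 ^ n := by
  calc (btSphere T n).ncard ≤ {l : List Bool | l.length = n}.ncard :=
        Set.ncard_le_ncard (fun _ hl => hl.2) (List.finite_length_eq Bool n)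
    _ = Nat.card (List.Vector Bool n) := rfl
    _ = 2 ^ n := by simp

lemma ncard_btSphere_branchTree_pos (n : ℕ) : 0 < (btSphere (branchTree A) n).ncard :=
  (Set.ncard_pos (btSphere_finite _ n)).2
    ⟨_, replicate_false_mem_branchTree n, List.length_replicate⟩

lemma two_pow_card_le_ncard_btSphere_branchTree [DecidablePred (· ∈ A)] (n : ℕ) :
    2 ^ #{i ∈ range n | i ∈ A} ≤ (btSphere (branchTree A) n).ncard := by
  set B := {i ∈ range n | i ∈ A}
  let toList (f : B → Bool) : List Bool :=
    List.ofFn fun i : Fin n => if h : (i : ℕ) ∈ B then f ⟨i, h⟩ else false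
  have hmem (f : B → Bool) : toList f ∈ btSphere (branchTree A) n := by
    refine ⟨fun i hi => ?_, List.length_ofFn⟩
    have : i ∉ B := by simp [B, hi]
    simp only [toList, List.getD_eq_getElem?_getD, List.getElem?_ofFn, dif_neg this]
    split <;> rfl
  have hinj : Function.Injective fun f => (⟨toList f, hmem f⟩ : btSphere (branchTree A) n) := by
    intro f g hfg
    funext ⟨i, hi⟩
    have hin : i < n := by simpa using (mem_filter.1 hi).1
    have := congrArg (fun l : List Bool => l.getD i false) (congrArg Subtype.val hfg)
    simpa [toList, hin, dif_pos hi] using this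
  have : Finite (btSphere (branchTree A) n) := (btSphere_finite _ n).to_subtype
  simpa using Nat.card_le_card_of_injective _ hinj

lemma ncard_branchTreeLevels_inter_btSphere_div [DecidablePred (· ∈ A)] (n : ℕ) :
    ((branchTreeLevels A ∩ btSphere (branchTree A) n).ncard : ℝ) /
      (btSphere (branchTree A) n).ncard = if n ∈ A then 1 else 0 := by
  split_ifs with hn
  · rw [Set.inter_eq_right.2 fun l hl => by exact ⟨hl.1, hl.2 ▸ hn⟩]
    exact div_self (Nat.cast_ne_zero.2 (ncard_btSphere_branchTree_pos n).ne')
  · have hempty : branchTreeLevels A ∩ btSphere (branchTree A) n = ∅ :=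
      Set.eq_empty_of_forall_notMem fun l hl => hn (hl.2.2 ▸ hl.1.2)
    simp [hempty]

end BranchTree

lemma liminf_pos_of_eventually_le {f : ℕ → ℝ} {c C : ℝ} (hc : 0 < c) (hf : ∀ᶠ n in atTop, c ≤ f n)
    (hC : ∀ n, f n ≤ C) : 0 < liminf f atTop :=
  hc.trans_le (le_liminf_of_le (isBoundedUnder_of ⟨C, hC⟩).isCoboundedUnder_ge hf)

section Density

variable {A : Set ℕ} {g : ℕ}

lemma btDimension_branchTree_pos (hA : IsSyndetic A g) : 0 < btDimension (branchTree A) := by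
  classical
  have hg₀ := hA.pos
  have hg : (0 : ℝ) < g := by exact_mod_cast hg₀
  refine liminf_pos_of_eventually_le (c := 1 / (4 * g)) (C := 1) (by positivity) ?_ fun n => ?_
  · filter_upwards [eventually_gt_atTop g] with n (hn : g < n)
    have hlog : (#{i ∈ range n | i ∈ A} : ℝ) ≤ Real.logb 2 (btSphere (branchTree A) n).ncard := by
      rw [Real.le_logb_iff_rpow_le one_lt_two (by exact_mod_cast ncard_btSphere_branchTree_pos n),
        Real.rpow_natCast]
      exact_mod_cast two_pow_card_le_ncard_btSphere_branchTree n
    rw [div_le_div_iff₀ (by positivity) (Nat.cast_pos.2 (by omega))]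
    have : (n : ℝ) ≤ 4 * g * #{i ∈ range n | i ∈ A} := by
      exact_mod_cast hA.le_four_mul_mul_card_filter_range hn
    nlinarith
  · rcases n.eq_zero_or_pos with rfl | hn
    · simp
    rw [div_le_one (by positivity), Real.logb_le_iff_le_rpow one_lt_two
      (by exact_mod_cast ncard_btSphere_branchTree_pos n), Real.rpow_natCast]
    exact_mod_cast ncard_btSphere_le _ n

lemma btLowerDensity_branchTreeLevels_pos (hA : IsSyndetic A g) :
    0 < btLowerDensity (branchTree A) (branchTreeLevels A) := by
  classical
  have hg₀ := hA.pos
  have hg : (0 : ℝ) < g := by exact_mod_cast hg₀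
  simp only [btLowerDensity, ncard_branchTreeLevels_inter_btSphere_div, sum_boole]
  refine liminf_pos_of_eventually_le (c := 1 / (2 * g)) (C := 1) (by positivity) ?_ fun N => ?_
  · filter_upwards [eventually_ge_atTop g] with N hN
    have : (N : ℝ) ≤ 2 * g * #{n ∈ Icc 1 N | n ∈ A} := by
      exact_mod_cast hA.le_two_mul_mul_card_filter_Icc hN
    rw [div_le_div_iff₀ (by positivity) (Nat.cast_pos.2 (by omega))]
    linarith
  · rcases N.eq_zero_or_pos with rfl | hN
    · simp
    rw [div_le_one (by positivity)]
    exact_mod_cast (card_filter_le _ _).trans (by simp)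

end Density

lemma exists_abs_btDist_mul_sub_lt {α ε : ℝ} {x y : List Bool}
    (hx : x ∈ branchTreeLevels (bohrSet α ε)) (hy : y ∈ branchTreeLevels (bohrSet α ε)) :
    ∃ z : ℤ, |(btDist x y : ℝ) * α - z| < 2 * ε :=
  exists_abs_sub_lt_of_mem_bohrSet hx.2 hy.2 (lcpLen_mem_of_mem_branchTreeLevels hx hy)
    (lcpLen_le_length_left x y) (lcpLen_le_length_right x y)

/-- There is a leafless rooted subtree `T ⊆ T₂ᵒ` of positive Hausdorff dimension and a
subset `X ⊆ V(T)` of positive lower density such that for all `k, K ≥ 1` there exists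
`t ≥ K` with no pair `x, y ∈ X` at distance `k·t`. -/
theorem stmt12 :
    ∃ (T X : Set (List Bool)),
      [] ∈ T ∧
      (∀ l ∈ T, ∀ p : List Bool, p <+: l → p ∈ T) ∧
      (∀ l ∈ T, ∃ b : Bool, l ++ [b] ∈ T) ∧
      X ⊆ T ∧
      0 < btDimension T ∧
      0 < btLowerDensity T X ∧
      ∀ k : ℕ, 1 ≤ k → ∀ K : ℕ, 1 ≤ K → ∃ t : ℕ, K ≤ t ∧
        ∀ x ∈ X, ∀ y ∈ X, btDist x y ≠ k * t := by
  refine ⟨branchTree (bohrSet √2 (1 / 8)), branchTreeLevels (bohrSet √2 (1 / 8)),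
    nil_mem_branchTree, fun l hl p hp => hp.mem_branchTree hl,
    fun l hl => ⟨false, append_false_mem_branchTree hl⟩, fun l hl => hl.1,
    btDimension_branchTree_pos isSyndetic_bohrSet_sqrt_two,
    btLowerDensity_branchTreeLevels_pos isSyndetic_bohrSet_sqrt_two, ?_⟩
  intro k hk K _
  obtain ⟨t, hKt, ht⟩ :=
    (irrational_sqrt_two.natCast_mul (by omega : k ≠ 0)).exists_nat_ge_quarter_le_abs_sub_round K
  refine ⟨t, hKt, fun x hx y hy hxy => ?_⟩
  obtain ⟨z, hz⟩ := exists_abs_btDist_mul_sub_lt hx hy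
  have hround := round_le ((t : ℝ) * (k * √2)) z
  rw [hxy, Nat.cast_mul, mul_comm (k : ℝ), mul_assoc] at hz
  linarith
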